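/- arXiv:1005.1310 — 3 statements merged into one kernel-verified Lean document; each statement's English description precedes it below -/
import Mathlib

section
/- Let G = ⊕_{i≥0} G_i be a graded ring with x_1,...,x_d ∈ G_1. If for some i, j, and n, the graded pieces H_i(x_1,...,x_k;G)_j vanish for all k ≤ n, then H_{i+1}(x_1,...,x_k;G)_{j+1} = 0 for all k ≤ n, where H_i denotes Koszul homology (with its induced grading). -/
/-!
STATEMENT 1: Let `G = ⊕_{i≥0} G_i` be a graded ring with `x_1,...,x_d ∈ G_1`.  If for some
`i`, `j`, `n`, the graded pieces `H_i(x_1,...,x_k;G)_j` vanish for all `k ≤ n`, then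
`H_{i+1}(x_1,...,x_k;G)_{j+1} = 0` for all `k ≤ n`.

We realize the Koszul complex concretely: the `i`-th Koszul module on `x_1,...,x_k` is the module
of functions from `{s : Finset (Fin k) // s.card = i}` to `G`, with the usual differential; its
grading places the generator indexed by a cardinality-`i` subset in degree `i`.  `H_i(x)_j = 0`
is stated as: every cycle in homological degree `i` whose components are homogeneous of degree
`j - i` is a boundary.  (Degrees are taken in `ℤ`, with `G_n = 0` for `n < 0`.)
-/

variable {G : Type*} [CommRing G]

/-- the degree-`n` piece, for `n : ℤ` (zero in negative degrees). -/
noncomputable def pieceZ (𝒜 : ℕ → AddSubgroup G) (n : ℤ) : AddSubgroup G :=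
  if 0 ≤ n then 𝒜 n.toNat else ⊥

/-- the `i`-th module in the Koszul complex on `k` elements. -/
def KMod (G : Type*) (k i : ℕ) := {s : Finset (Fin k) // s.card = i} → G

/-- the Koszul differential `K_{i+1} → K_i` on `x_1,...,x_k`. -/
def kdiff {k : ℕ} (x : Fin k → G) (i : ℕ) (f : KMod G k (i + 1)) : KMod G k i :=
  fun t => ∑ a ∈ (Finset.univ \ t.1).attach,
    (-1 : G) ^ ((t.1.filter (fun b => b < a.1)).card) * x a.1 *
      f ⟨insert a.1 t.1, by
        rcases t with ⟨t, ht⟩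
        have ha := (Finset.mem_sdiff.mp a.2).2
        simp [Finset.card_insert_of_notMem ha, ht]⟩

/-- being a cycle in homological degree `i` (every element is a cycle in degree `0`). -/
def IsKCycle {k : ℕ} (x : Fin k → G) : (i : ℕ) → KMod G k i → Prop
  | 0, _ => True
  | (i + 1), f => ∀ t, kdiff x i f t = 0

/-- `H_i(x_1,...,x_k; G)_j = 0`: every homogeneous cycle of internal degree `j` in homological
degree `i` is a boundary. -/
def KoszulHVanish (𝒜 : ℕ → AddSubgroup G) {k : ℕ} (x : Fin k → G) (i : ℕ) (j : ℤ) : Prop :=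
  ∀ f : KMod G k i, IsKCycle x i f → (∀ s, f s ∈ pieceZ 𝒜 (j - i)) →
    ∃ g : KMod G k (i + 1), kdiff x i g = f

section KoszulAux

noncomputable def projZ (𝒜 : ℕ → AddSubgroup G) [GradedRing 𝒜] (m : ℤ) (g : G) : G :=
  if 0 ≤ m then (DirectSum.decompose 𝒜 g m.toNat : G) else 0

variable (𝒜 : ℕ → AddSubgroup G) [GradedRing 𝒜]

lemma projZ_add (m : ℤ) (a b : G) : projZ 𝒜 m (a + b) = projZ 𝒜 m a + projZ 𝒜 m b := by
  unfold projZ; split <;> simp [DirectSum.decompose_add]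

lemma projZ_mem (m : ℤ) (g : G) : projZ 𝒜 m g ∈ pieceZ 𝒜 m := by
  unfold projZ pieceZ; split
  · exact SetLike.coe_mem _
  · exact AddSubgroup.zero_mem _

lemma projZ_of_mem {m : ℤ} {g : G} (hg : g ∈ pieceZ 𝒜 m) : projZ 𝒜 m g = g := by
  unfold projZ pieceZ at *; split at hg
  · rw [if_pos ‹_›, DirectSum.decompose_of_mem_same 𝒜 hg]
  · rw [if_neg ‹_›]; simpa using hg.symm

lemma projZ_mul {x : G} (hx : x ∈ 𝒜 1) (m : ℤ) (g : G) :
    projZ 𝒜 (m + 1) (x * g) = x * projZ 𝒜 m g := by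
  unfold projZ
  by_cases hm : 0 ≤ m
  · rw [if_pos hm, if_pos (by omega)]
    have h1 : (m + 1).toNat = m.toNat + 1 := by omega
    rw [h1, DirectSum.coe_decompose_mul_of_left_mem_of_le 𝒜 hx (by omega)]
    congr 1
  · rw [if_neg hm]
    by_cases hm1 : 0 ≤ m + 1
    · rw [if_pos hm1]
      have h0 : (m + 1).toNat = 0 := by omega
      rw [h0, DirectSum.coe_decompose_mul_of_left_mem_of_not_le 𝒜 hx (by omega), mul_zero]
    · rw [if_neg hm1, mul_zero]

lemma projZ_sum (m : ℤ) {α : Type*} (s : Finset α) (F : α → G) :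
    projZ 𝒜 m (∑ a ∈ s, F a) = ∑ a ∈ s, projZ 𝒜 m (F a) := by
  classical
  induction s using Finset.induction with
  | empty => unfold projZ; split <;> simp
  | insert a s hx ih => rw [Finset.sum_insert hx, Finset.sum_insert hx, projZ_add, ih]

lemma mul_mem_pieceZ {x : G} (hx : x ∈ 𝒜 1) {m : ℤ} {g : G} (hg : g ∈ pieceZ 𝒜 m) :
    x * g ∈ pieceZ 𝒜 (m + 1) := by
  unfold pieceZ at *
  by_cases hm : 0 ≤ m
  · rw [if_pos hm] at hg
    rw [if_pos (by omega)]
    have := SetLike.mul_mem_graded hx hg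
    have h1 : (m+1).toNat = 1 + m.toNat := by omega
    rwa [h1]
  · rw [if_neg hm] at hg
    simp only [AddSubgroup.mem_bot] at hg
    subst hg
    rw [mul_zero]
    split <;> exact zero_mem _

/-- value-level term of the Koszul differential. -/
def kterm {k : ℕ} (x : Fin k → G) (i : ℕ) (f : KMod G k (i + 1)) (t : Finset (Fin k))
    (a : Fin k) : G :=
  (-1 : G) ^ ((t.filter (fun b => b < a)).card) * x a *
    (if h : (insert a t).card = i + 1 then f ⟨insert a t, h⟩ else 0)

lemma kdiff_eq {k : ℕ} (x : Fin k → G) (i : ℕ) (f : KMod G k (i + 1))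
    (t : {s : Finset (Fin k) // s.card = i}) :
    kdiff x i f t = ∑ a ∈ Finset.univ \ t.1, kterm x i f t.1 a := by
  rw [kdiff, ← Finset.sum_attach (Finset.univ \ t.1) (kterm x i f t.1)]
  apply Finset.sum_congr rfl
  intro a _
  have ha := (Finset.mem_sdiff.mp a.2).2
  have hc : (insert a.1 t.1).card = i + 1 := by
    rw [Finset.card_insert_of_notMem ha, t.2]
  rw [kterm, dif_pos hc]

omit [CommRing G] in
lemma kterm_congr {k : ℕ} (i : ℕ) (f : KMod G k (i+1)) {s s' : Finset (Fin k)}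
    (h : s = s') (hc : s.card = i + 1) (hc' : s'.card = i + 1) :
    f ⟨s, hc⟩ = f ⟨s', hc'⟩ := by subst h; rfl

lemma kdiff_add {k : ℕ} (x : Fin k → G) (i : ℕ) (f g : KMod G k (i + 1)) (t) :
    kdiff x i (fun s => f s + g s) t = kdiff x i f t + kdiff x i g t := by
  simp only [kdiff_eq x i (fun s => f s + g s), kdiff_eq, kterm, ← Finset.sum_add_distrib]
  apply Finset.sum_congr rfl
  intro a _
  split <;> ring

lemma kdiff_sub {k : ℕ} (x : Fin k → G) (i : ℕ) (f g : KMod G k (i + 1)) (t) :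
    kdiff x i (fun s => f s - g s) t = kdiff x i f t - kdiff x i g t := by
  simp only [kdiff_eq x i (fun s => f s - g s), kdiff_eq, kterm, ← Finset.sum_sub_distrib]
  apply Finset.sum_congr rfl
  intro a _
  split <;> ring

lemma kdiff_const_mul {k : ℕ} (x : Fin k → G) (i : ℕ) (c : G) (f : KMod G k (i + 1)) (t) :
    kdiff x i (fun s => c * f s) t = c * kdiff x i f t := by
  simp only [kdiff_eq x i (fun s => c * f s), kdiff_eq, kterm, Finset.mul_sum]
  apply Finset.sum_congr rfl
  intro a _
  split <;> ring

section FinCombinatorics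
open Finset
variable {k : ℕ}


lemma last_not_mem_image (t : Finset (Fin k)) :
    Fin.last k ∉ t.image Fin.castSucc := by
  simp only [mem_image, not_exists]
  rintro a ⟨-, ha⟩
  exact (Fin.castSucc_lt_last a).ne ha

lemma card_image_cs (t : Finset (Fin k)) :
    (t.image Fin.castSucc).card = t.card :=
  Finset.card_image_of_injective _ (Fin.castSucc_injective k)

lemma filter_image_lt (t : Finset (Fin k)) (a : Fin k) :
    ((t.image Fin.castSucc).filter (fun b => b < Fin.castSucc a)).card
      = (t.filter (fun b => b < a)).card := by
  rw [Finset.filter_image]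
  simp_rw [Fin.castSucc_lt_castSucc_iff]
  exact card_image_cs _

lemma filter_insert_last_lt (S : Finset (Fin (k+1))) (a : Fin k) :
    ((insert (Fin.last k) S).filter (fun b => b < Fin.castSucc a)).card
      = (S.filter (fun b => b < Fin.castSucc a)).card := by
  rw [Finset.filter_insert, if_neg (Fin.not_lt.mpr (Fin.castSucc_lt_last a).le)]

lemma filter_lt_last (t : Finset (Fin k)) :
    ((t.image Fin.castSucc).filter (fun b => b < Fin.last k)).card = t.card := by
  rw [Finset.filter_true_of_mem, card_image_cs]
  intro b hb
  rcases Finset.mem_image.mp hb with ⟨a, -, rfl⟩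
  exact Fin.castSucc_lt_last a

lemma sdiff_image_cs (t : Finset (Fin k)) :
    (Finset.univ : Finset (Fin (k+1))) \ t.image Fin.castSucc
      = insert (Fin.last k) ((Finset.univ \ t).image Fin.castSucc) := by
  ext b
  rcases Fin.eq_castSucc_or_eq_last b with ⟨a, rfl⟩ | rfl
  · simp [Fin.castSucc_injective k |>.eq_iff, (Fin.castSucc_lt_last a).ne,
      Fin.castSucc_injective k]
  · simp only [Finset.mem_sdiff, Finset.mem_univ, true_and, Finset.mem_insert, true_or,
      iff_true]
    exact last_not_mem_image t

lemma sdiff_insert_last (t : Finset (Fin k)) :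
    (Finset.univ : Finset (Fin (k+1))) \ insert (Fin.last k) (t.image Fin.castSucc)
      = (Finset.univ \ t).image Fin.castSucc := by
  ext b
  rcases Fin.eq_castSucc_or_eq_last b with ⟨a, rfl⟩ | rfl
  · simp [(Fin.castSucc_lt_last a).ne, Fin.castSucc_injective k |>.eq_iff,
      Fin.castSucc_injective k]
  · constructor
    · intro hb
      exact ((Finset.mem_sdiff.mp hb).2 (Finset.mem_insert_self _ _)).elim
    · intro hb
      exact (last_not_mem_image _ hb).elim

lemma insert_cs_image (t : Finset (Fin k)) (a : Fin k) :
    insert (Fin.castSucc a) (t.image Fin.castSucc) = (insert a t).image Fin.castSucc :=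
  (Finset.image_insert _ _ _).symm

/-- pull a finset of `Fin (k+1)` down to `Fin k` along `castSucc`. -/
noncomputable def down (s : Finset (Fin (k+1))) : Finset (Fin k) :=
  s.preimage Fin.castSucc (Fin.castSucc_injective k).injOn

lemma down_image (t : Finset (Fin k)) : down (t.image Fin.castSucc) = t := by
  ext a
  simp [down, Finset.mem_preimage, (Fin.castSucc_injective k).eq_iff]

lemma down_insert_last (s : Finset (Fin (k+1))) : down (insert (Fin.last k) s) = down s := by
  unfold down
  ext a
  simp [Finset.mem_preimage, (Fin.castSucc_lt_last a).ne]

lemma image_down_of_not_mem {s : Finset (Fin (k+1))} (h : Fin.last k ∉ s) :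
    (down s).image Fin.castSucc = s := by
  ext b
  rcases Fin.eq_castSucc_or_eq_last b with ⟨a, rfl⟩ | rfl
  · simp [down, Finset.mem_preimage, Fin.castSucc_injective k |>.eq_iff,
      Fin.castSucc_injective k]
  · constructor
    · intro hb
      exact (last_not_mem_image _ hb).elim
    · intro hb
      exact (h hb).elim

lemma insert_image_down_of_mem {s : Finset (Fin (k+1))} (h : Fin.last k ∈ s) :
    insert (Fin.last k) ((down s).image Fin.castSucc) = s := by
  ext b
  rcases Fin.eq_castSucc_or_eq_last b with ⟨a, rfl⟩ | rfl
  · simp [down, Finset.mem_preimage, (Fin.castSucc_lt_last a).ne,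
      Fin.castSucc_injective k |>.eq_iff, Fin.castSucc_injective k]
  · simp [h]

lemma card_down_of_not_mem {s : Finset (Fin (k+1))} (h : Fin.last k ∉ s) :
    (down s).card = s.card := by
  rw [← card_image_cs, image_down_of_not_mem h]

lemma card_down_of_mem {s : Finset (Fin (k+1))} (h : Fin.last k ∈ s) :
    (down s).card + 1 = s.card := by
  rw [← card_image_cs, ← Finset.card_insert_of_notMem (last_not_mem_image _),
    insert_image_down_of_mem h]

end FinCombinatorics

section UpDown
open Finset


variable {k : ℕ}

omit [CommRing G] in
lemma KMod_congr {i : ℕ} (f : KMod G k i) {s s' : Finset (Fin k)}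
    (h : s = s') (hc : s.card = i) (hc' : s'.card = i) :
    f ⟨s, hc⟩ = f ⟨s', hc'⟩ := by subst h; rfl

/-- restriction to subsets avoiding the last index. -/
def res0 {m : ℕ} (v : KMod G (k+1) m) : KMod G k m := fun t =>
  v ⟨t.1.image Fin.castSucc, by rw [card_image_cs, t.2]⟩

/-- restriction to subsets containing the last index. -/
def res1 {m : ℕ} (v : KMod G (k+1) (m+1)) : KMod G k m := fun t =>
  v ⟨insert (Fin.last k) (t.1.image Fin.castSucc), by
    rw [Finset.card_insert_of_notMem (last_not_mem_image _), card_image_cs, t.2]⟩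

/-- extension by zero on subsets containing the last index. -/
noncomputable def up0 {m : ℕ} (u : KMod G k m) : KMod G (k+1) m := fun s =>
  if h : Fin.last k ∈ s.1 then 0
  else u ⟨down s.1, by rw [card_down_of_not_mem h, s.2]⟩

/-- extension by zero on subsets avoiding the last index. -/
noncomputable def up1 {m : ℕ} (u : KMod G k m) : KMod G (k+1) (m+1) := fun s =>
  if h : Fin.last k ∈ s.1 then
    u ⟨down s.1, by have h2 := card_down_of_mem h; rw [s.2] at h2; omega⟩
  else 0

lemma res0_up0 {m : ℕ} (u : KMod G k m) : res0 (up0 u) = u := by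
  funext t
  show up0 u ⟨t.1.image Fin.castSucc, _⟩ = u t
  rw [up0, dif_neg (last_not_mem_image t.1)]
  exact (KMod_congr u (down_image t.1) _ _).trans (by rfl)

lemma res1_up0 {m : ℕ} (u : KMod G k (m+1)) (t) : res1 (up0 u) t = 0 := by
  show up0 u ⟨insert (Fin.last k) (t.1.image Fin.castSucc), _⟩ = 0
  rw [up0, dif_pos (Finset.mem_insert_self _ _)]

lemma res0_up1 {m : ℕ} (u : KMod G k m) (t) : res0 (up1 u) t = 0 := by
  show up1 u ⟨t.1.image Fin.castSucc, _⟩ = 0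
  rw [up1, dif_neg (last_not_mem_image t.1)]

lemma res1_up1 {m : ℕ} (u : KMod G k m) : res1 (up1 u) = u := by
  funext t
  show up1 u ⟨insert (Fin.last k) (t.1.image Fin.castSucc), _⟩ = u t
  rw [up1, dif_pos (Finset.mem_insert_self _ _)]
  exact (KMod_congr u (by rw [down_insert_last, down_image]) _ _).trans (by rfl)

lemma KMod_ext {m : ℕ} (v w : KMod G (k+1) (m+1))
    (h0 : ∀ t, res0 v t = res0 w t) (h1 : ∀ t, res1 v t = res1 w t) : v = w := by
  funext s
  by_cases hl : Fin.last k ∈ s.1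
  · have hs : insert (Fin.last k) ((down s.1).image Fin.castSucc) = s.1 :=
      insert_image_down_of_mem hl
    have hc : (down s.1).card = m := by
      have h2 := card_down_of_mem hl; rw [s.2] at h2; omega
    have e1 : v s = res1 v ⟨down s.1, hc⟩ := KMod_congr v hs.symm _ _
    have e2 : w s = res1 w ⟨down s.1, hc⟩ := KMod_congr w hs.symm _ _
    rw [e1, e2, h1]
  · have hs : (down s.1).image Fin.castSucc = s.1 := image_down_of_not_mem hl
    have hc : (down s.1).card = m + 1 := by rw [card_down_of_not_mem hl, s.2]
    have e1 : v s = res0 v ⟨down s.1, hc⟩ := KMod_congr v hs.symm _ _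
    have e2 : w s = res0 w ⟨down s.1, hc⟩ := KMod_congr w hs.symm _ _
    rw [e1, e2, h0]

variable (xK : Fin (k+1) → G)

lemma sum_sdiff_image (t : Finset (Fin k)) (F : Fin (k+1) → G) :
    ∑ a ∈ Finset.univ \ t.image Fin.castSucc, F a
      = F (Fin.last k) + ∑ a ∈ Finset.univ \ t, F (Fin.castSucc a) := by
  rw [sdiff_image_cs, Finset.sum_insert (last_not_mem_image _),
    Finset.sum_image (fun a _ b _ h => Fin.castSucc_injective k h)]

lemma sum_sdiff_insert_last (t : Finset (Fin k)) (F : Fin (k+1) → G) :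
    ∑ a ∈ Finset.univ \ insert (Fin.last k) (t.image Fin.castSucc), F a
      = ∑ a ∈ Finset.univ \ t, F (Fin.castSucc a) := by
  rw [sdiff_insert_last, Finset.sum_image (fun a _ b _ h => Fin.castSucc_injective k h)]

lemma kterm_castSucc {m : ℕ} (v : KMod G (k+1) (m+1)) {t : Finset (Fin k)}
    (ht : t.card = m) {a : Fin k} (ha : a ∉ t) :
    kterm xK m v (t.image Fin.castSucc) (Fin.castSucc a)
      = kterm (fun b => xK (Fin.castSucc b)) m (res0 v) t a := by
  have h2 : (insert a t).card = m + 1 := by rw [Finset.card_insert_of_notMem ha, ht]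
  have h1 : (insert (Fin.castSucc a) (t.image Fin.castSucc)).card = m + 1 := by
    rw [insert_cs_image, card_image_cs, h2]
  unfold kterm
  rw [dif_pos h1, dif_pos h2, filter_image_lt]
  congr 1
  exact KMod_congr v (insert_cs_image t a) _ _

lemma kterm_castSucc_insertLast {m : ℕ} (v : KMod G (k+1) (m+2)) {t : Finset (Fin k)}
    (ht : t.card = m) {a : Fin k} (ha : a ∉ t) :
    kterm xK (m+1) v (insert (Fin.last k) (t.image Fin.castSucc)) (Fin.castSucc a)
      = kterm (fun b => xK (Fin.castSucc b)) m (res1 v) t a := by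
  have h2 : (insert a t).card = m + 1 := by rw [Finset.card_insert_of_notMem ha, ht]
  have h1 : (insert (Fin.castSucc a) (insert (Fin.last k) (t.image Fin.castSucc))).card
      = m + 2 := by
    rw [Finset.insert_comm, insert_cs_image,
      Finset.card_insert_of_notMem (last_not_mem_image _), card_image_cs, h2]
  have h3 : (insert (Fin.last k) ((insert a t).image Fin.castSucc)).card = m + 2 := by
    rw [Finset.card_insert_of_notMem (last_not_mem_image _), card_image_cs, h2]
  unfold kterm
  rw [dif_pos h1, dif_pos h2, filter_insert_last_lt, filter_image_lt]
  congr 1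
  exact (KMod_congr v (by rw [Finset.insert_comm, insert_cs_image]) h1 h3).trans (by rfl)

lemma res0_kdiff {m : ℕ} (v : KMod G (k+1) (m+1)) (t) :
    res0 (kdiff xK m v) t
      = kdiff (fun b => xK (Fin.castSucc b)) m (res0 v) t
        + (-1 : G) ^ m * xK (Fin.last k) * res1 v t := by
  have step : res0 (kdiff xK m v) t
      = ∑ a ∈ Finset.univ \ t.1.image Fin.castSucc, kterm xK m v (t.1.image Fin.castSucc) a :=
    kdiff_eq xK m v _
  rw [step, sum_sdiff_image]
  have hlast : kterm xK m v (t.1.image Fin.castSucc) (Fin.last k)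
      = (-1 : G) ^ m * xK (Fin.last k) * res1 v t := by
    have hc : (insert (Fin.last k) (t.1.image Fin.castSucc)).card = m + 1 := by
      rw [Finset.card_insert_of_notMem (last_not_mem_image _), card_image_cs, t.2]
    unfold kterm
    rw [dif_pos hc, filter_lt_last, t.2]
    rfl
  rw [hlast, kdiff_eq, add_comm]
  congr 1
  apply Finset.sum_congr rfl
  intro a ha
  exact kterm_castSucc xK v t.2 (Finset.mem_sdiff.mp ha).2

lemma res1_kdiff {m : ℕ} (v : KMod G (k+1) (m+2)) (t) :
    res1 (kdiff xK (m+1) v) t = kdiff (fun b => xK (Fin.castSucc b)) m (res1 v) t := by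
  have step : res1 (kdiff xK (m+1) v) t
      = ∑ a ∈ Finset.univ \ insert (Fin.last k) (t.1.image Fin.castSucc),
          kterm xK (m+1) v (insert (Fin.last k) (t.1.image Fin.castSucc)) a :=
    kdiff_eq xK (m+1) v _
  rw [step, sum_sdiff_insert_last, kdiff_eq]
  apply Finset.sum_congr rfl
  intro a ha
  exact kterm_castSucc_insertLast xK v t.2 (Finset.mem_sdiff.mp ha).2

lemma kdiff_zero_fun {k' : ℕ} (x : Fin k' → G) (i : ℕ) (t) :
    kdiff x i (fun _ => (0 : G)) t = 0 := by
  rw [kdiff_eq x i (fun _ => (0 : G))]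
  apply Finset.sum_eq_zero
  intro a _
  unfold kterm
  split <;> simp

end UpDown

section Lift

variable {G : Type*} [CommRing G] (𝒜 : ℕ → AddSubgroup G) [GradedRing 𝒜]

lemma projZ_zero (m : ℤ) : projZ 𝒜 m (0 : G) = 0 := by
  unfold projZ; split <;> simp

lemma kdiff_projZ {k : ℕ} {x : Fin k → G} (hx : ∀ a, x a ∈ 𝒜 1) (i : ℕ)
    (f : KMod G k (i+1)) (m : ℤ) (t) :
    kdiff x i (fun s => projZ 𝒜 m (f s)) t = projZ 𝒜 (m+1) (kdiff x i f t) := by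
  rw [kdiff_eq x i (fun s => projZ 𝒜 m (f s)), kdiff_eq, projZ_sum]
  apply Finset.sum_congr rfl
  intro a _
  unfold kterm
  split
  · have h0 : ((-1 : G)) ^ ((t.1.filter (fun b => b < a)).card) ∈ 𝒜 0 := by
      simpa using SetLike.pow_mem_graded ((t.1.filter (fun b => b < a)).card)
        (neg_mem (SetLike.one_mem_graded 𝒜))
    have hy : ((-1 : G)) ^ ((t.1.filter (fun b => b < a)).card) * x a ∈ 𝒜 1 := by
      simpa using SetLike.mul_mem_graded h0 (hx a)
    exact (projZ_mul 𝒜 hy m _).symm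
  · simp [projZ_zero]

lemma vanish_lift {k : ℕ} {x : Fin k → G} (hx : ∀ a, x a ∈ 𝒜 1) {i : ℕ} {j : ℤ}
    (hK : KoszulHVanish 𝒜 x i j) (f : KMod G k i) (hcyc : IsKCycle x i f)
    (hmem : ∀ s, f s ∈ pieceZ 𝒜 (j - i)) :
    ∃ g : KMod G k (i+1), kdiff x i g = f ∧ ∀ s, g s ∈ pieceZ 𝒜 (j - i - 1) := by
  obtain ⟨g, hg⟩ := hK f hcyc hmem
  refine ⟨fun s => projZ 𝒜 (j - i - 1) (g s), ?_, fun s => projZ_mem 𝒜 _ _⟩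
  funext t
  rw [kdiff_projZ 𝒜 hx]
  have hidx : j - (i : ℤ) - 1 + 1 = j - i := by ring
  rw [hidx, hg]
  exact projZ_of_mem 𝒜 (hmem t)

end Lift


end KoszulAux

theorem stmt1 (𝒜 : ℕ → AddSubgroup G) [GradedRing 𝒜]
    (d n : ℕ) (hnd : n ≤ d) (x : Fin d → G) (hx : ∀ m, x m ∈ 𝒜 1)
    (i : ℕ) (j : ℤ)
    (h : ∀ (k : ℕ) (hk : k ≤ n),
      KoszulHVanish 𝒜 (fun m : Fin k => x (Fin.castLE (hk.trans hnd) m)) i j) :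
    ∀ (k : ℕ) (hk : k ≤ n),
      KoszulHVanish 𝒜 (fun m : Fin k => x (Fin.castLE (hk.trans hnd) m)) (i + 1) (j + 1) := by
  intro k
  induction k with
  | zero =>
    intro hk f hcyc hmem
    refine ⟨fun _ => 0, ?_⟩
    funext t
    exfalso
    have h0 : t.1 = ∅ := Finset.eq_empty_of_forall_notMem fun a _ => a.elim0
    have ht := t.2
    rw [h0] at ht
    simp at ht
  | succ k ih =>
    intro hk f hcyc hmem
    have hkn : k ≤ n := Nat.le_of_succ_le hk
    set xK : Fin (k+1) → G := fun m => x (Fin.castLE (hk.trans hnd) m) with hxK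
    have hxK1 : ∀ a, xK a ∈ 𝒜 1 := fun a => hx _
    have hxk1 : ∀ a : Fin k, xK (Fin.castSucc a) ∈ 𝒜 1 := fun a => hx _
    have hcyc' : ∀ t, kdiff xK i f t = 0 := hcyc
    -- index arithmetic
    have hidx : j + 1 - ((i + 1 : ℕ) : ℤ) = j - i := by push_cast; ring
    have hmem' : ∀ s, f s ∈ pieceZ 𝒜 (j - i) := by
      intro s; have hm := hmem s; rwa [hidx] at hm
    -- the restriction `res1 f` is a cycle
    have hf''cyc : IsKCycle (fun b : Fin k => xK (Fin.castSucc b)) i (res1 f) := by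
      cases i with
      | zero => trivial
      | succ i₀ =>
        intro t
        rw [← res1_kdiff xK f t]
        exact hcyc' _
    -- lift it to a homogeneous boundary, using the hypothesis in homological degree `i`
    have hKk : KoszulHVanish 𝒜 (fun b : Fin k => xK (Fin.castSucc b)) i j := h k hkn
    obtain ⟨g'', hg'', hg''m⟩ := vanish_lift 𝒜 hxk1 hKk (res1 f) hf''cyc
      (fun s => hmem' _)
    -- the corrected restriction `f1`
    set f1 : KMod G k (i+1) :=
      fun t => res0 f t - (-1 : G) ^ (i+1) * xK (Fin.last k) * g'' t with hf1
    have hf1cyc : IsKCycle (fun b : Fin k => xK (Fin.castSucc b)) (i+1) f1 := by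
      intro t
      rw [hf1]; erw [kdiff_sub, kdiff_const_mul]
      have e2 : kdiff (fun b : Fin k => xK (Fin.castSucc b)) i (res0 f) t
          + (-1 : G) ^ i * xK (Fin.last k) * res1 f t = 0 := by
        rw [← res0_kdiff]
        exact hcyc' _
      have e3 : kdiff (fun b : Fin k => xK (Fin.castSucc b)) i g'' t = res1 f t :=
        congrFun hg'' t
      rw [e3]
      linear_combination e2
    have hf1mem : ∀ s, f1 s ∈ pieceZ 𝒜 (j + 1 - ((i + 1 : ℕ) : ℤ)) := by
      intro s
      rw [hidx, hf1]
      apply sub_mem (hmem' _)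
      have hmul : xK (Fin.last k) * g'' s ∈ pieceZ 𝒜 (j - i) := by
        have := mul_mem_pieceZ 𝒜 (hxK1 (Fin.last k)) (hg''m s)
        have e : j - (i : ℤ) - 1 + 1 = j - i := by ring
        rwa [e] at this
      rw [mul_assoc]
      rcases neg_one_pow_eq_or G (i+1) with hp | hp <;> rw [hp]
      · rwa [one_mul]
      · rw [neg_mul, one_mul]
        exact neg_mem hmul
    -- apply the inductive hypothesis to `f1`
    have hIH : KoszulHVanish 𝒜 (fun b : Fin k => xK (Fin.castSucc b)) (i+1) (j+1) := ih hkn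
    obtain ⟨g1, hg1⟩ := hIH f1 hf1cyc hf1mem
    refine ⟨fun s => up1 g'' s + up0 g1 s, ?_⟩
    apply KMod_ext
    · -- restriction avoiding the last index
      intro t
      have hadd : res0 (kdiff xK (i+1) (fun s => up1 g'' s + up0 g1 s)) t
          = res0 (kdiff xK (i+1) (up1 g'')) t + res0 (kdiff xK (i+1) (up0 g1)) t :=
        kdiff_add xK (i+1) (up1 g'') (up0 g1) _
      rw [hadd, res0_kdiff, res0_kdiff, res1_up1, res0_up0,
        funext (res0_up1 g''), kdiff_zero_fun, funext (res1_up0 g1 : _)]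
      have e4 : kdiff (fun b : Fin k => xK (Fin.castSucc b)) (i+1) g1 t = f1 t :=
        congrFun hg1 t
      rw [e4, hf1]
      ring
    · -- restriction containing the last index
      intro t
      have hadd : res1 (kdiff xK (i+1) (fun s => up1 g'' s + up0 g1 s)) t
          = res1 (kdiff xK (i+1) (up1 g'')) t + res1 (kdiff xK (i+1) (up0 g1)) t :=
        kdiff_add xK (i+1) (up1 g'') (up0 g1) _
      rw [hadd, res1_kdiff, res1_kdiff, res1_up1, funext (res1_up0 g1 : _),
        kdiff_zero_fun, add_zero]
      exact congrFun hg'' t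
end

section
/- Let G = ⊕_{i≥0} G_i be a graded commutative ring with x_1,...,x_d in G_1. For a fixed integer n and 1 ≤ l ≤ d, the vanishing H_1(x_1,...,x_k;G)_j = 0 for all j ≤ n and all 1 ≤ k ≤ l holds if and only if for all 1 ≤ k ≤ l, the colon ideal (x_1,...,x_{k-1}) :_G x_k is contained in (x_1,...,x_{k-1}) + ⊕_{i ≥ n} G_i. -/
/-!
STATEMENT 2: Let `G = ⊕_{i≥0} G_i` be a graded commutative ring with `x_1,...,x_d ∈ G_1` and fix
`n` and `1 ≤ l ≤ d`.  Then `H_1(x_1,...,x_k;G)_j = 0` for all `j ≤ n` and all `1 ≤ k ≤ l` iff for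
all `1 ≤ k ≤ l` the colon ideal `(x_1,...,x_{k-1}) :_G x_k` is contained in
`(x_1,...,x_{k-1}) + ⊕_{i ≥ n} G_i`.

`H_1(x_1,...,x_k;G)_j = 0` is stated concretely: every relation `∑ r_i x_i = 0` with all `r_i`
homogeneous of degree `j - 1` is a combination of the Koszul relations, i.e. `r = x·S` for a
skew-symmetric matrix `S` over `G`.  (For `j ≤ 0` the graded piece of `H_1` is zero for trivial
degree reasons, so the quantification over `1 ≤ j ≤ n` is equivalent to `j ≤ n`.)
-/

variable {G : Type*} [CommRing G]

open DirectSum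

/-- Elements of the ideal generated by elements of degree ≥ n have no components below n. -/
lemma high_comp_zero (𝒜 : ℕ → AddSubgroup G) [GradedRing 𝒜] (n : ℕ) {g : G}
    (hg : g ∈ Ideal.span {a : G | ∃ i : ℕ, n ≤ i ∧ a ∈ 𝒜 i}) {m : ℕ} (hm : m < n) :
    (DirectSum.decompose 𝒜 g m : G) = 0 := by
  have key : ∀ g', g' ∈ Ideal.span {a : G | ∃ i : ℕ, n ≤ i ∧ a ∈ 𝒜 i} →
      ∀ r : G, (DirectSum.decompose 𝒜 (r * g') m : G) = 0 := by
    intro g' hg'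
    refine Submodule.span_induction ?_ ?_ ?_ ?_ hg'
    · rintro a ⟨i, hni, hai⟩ r
      exact DirectSum.coe_decompose_mul_of_right_mem_of_not_le 𝒜 hai (by omega)
    · intro r; simp
    · intro a b _ _ ha hb r
      have : r * (a + b) = r * a + r * b := by ring
      have h2 : (DirectSum.decompose 𝒜 (r * a + r * b) m : G)
          = (DirectSum.decompose 𝒜 (r * a) m : G) + (DirectSum.decompose 𝒜 (r * b) m : G) := by
        simpa [GradedRing.proj_apply] using map_add (GradedRing.proj 𝒜 m) (r * a) (r * b)
      rw [this, h2, ha r, hb r, add_zero]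
    · intro c a _ ha r
      have : r * (c • a) = (r * c) * a := by simp [smul_eq_mul]; ring
      rw [this]
      exact ha (r * c)
  have := key g hg 1
  rwa [one_mul] at this

/-- A homogeneous element of degree q in a span of degree-1 elements can be written with
homogeneous coefficients of degree q-1. -/
lemma span_coeffs (𝒜 : ℕ → AddSubgroup G) [GradedRing 𝒜] {p : ℕ} (v : Fin p → G)
    (hv : ∀ i, v i ∈ 𝒜 1) (q : ℕ) {g : G} (hgq : g ∈ 𝒜 q)
    (hg : g ∈ Ideal.span (Set.range v)) :
    ∃ s : Fin p → G, (∀ i, s i ∈ 𝒜 (q - 1)) ∧ (∀ i, ∀ u ∈ 𝒜 1, s i * u ∈ 𝒜 q) ∧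
      g = ∑ i, s i * v i := by
  rw [Ideal.span, Submodule.mem_span_range_iff_exists_fun] at hg
  obtain ⟨c, hc⟩ := hg
  simp only [smul_eq_mul] at hc
  have hdec : g = ∑ i, (DirectSum.decompose 𝒜 (c i * v i) q : G) := by
    calc g = (DirectSum.decompose 𝒜 g q : G) := (DirectSum.decompose_of_mem_same 𝒜 hgq).symm
    _ = (DirectSum.decompose 𝒜 (∑ i, c i * v i) q : G) := by rw [hc]
    _ = ∑ i, (DirectSum.decompose 𝒜 (c i * v i) q : G) := by
        have := map_sum (GradedRing.proj 𝒜 q) (fun i => c i * v i) Finset.univ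
        simp only [GradedRing.proj_apply] at this
        exact this
  rcases Nat.eq_zero_or_pos q with hq | hq
  · subst hq
    refine ⟨0, fun _ => by simpa using (𝒜 0).zero_mem, fun _ u _ => by simpa using (𝒜 0).zero_mem, ?_⟩
    have : g = 0 := by
      rw [hdec]
      refine Finset.sum_eq_zero fun i _ => ?_
      exact DirectSum.coe_decompose_mul_of_right_mem_of_not_le 𝒜 (hv i) (by omega)
    simp [this]
  · refine ⟨fun i => (DirectSum.decompose 𝒜 (c i) (q - 1) : G), fun i => SetLike.coe_mem _,
      ?_, ?_⟩
    · intro i u hu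
      have := SetLike.mul_mem_graded (SetLike.coe_mem (DirectSum.decompose 𝒜 (c i) (q - 1))) hu
      rwa [show q - 1 + 1 = q by omega] at this
    · rw [hdec]
      refine Finset.sum_congr rfl fun i _ => ?_
      exact DirectSum.coe_decompose_mul_of_right_mem_of_le 𝒜 (hv i) (by omega)

lemma sup_coeffs (𝒜 : ℕ → AddSubgroup G) [GradedRing 𝒜] {p : ℕ} (v : Fin p → G)
    (hv : ∀ i, v i ∈ 𝒜 1) {n q : ℕ} (hqn : q < n) {g : G} (hgq : g ∈ 𝒜 q)
    (hg : g ∈ Ideal.span (Set.range v) ⊔ Ideal.span {a : G | ∃ i : ℕ, n ≤ i ∧ a ∈ 𝒜 i}) :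
    ∃ s : Fin p → G, (∀ i, s i ∈ 𝒜 (q - 1)) ∧ (∀ i, ∀ u ∈ 𝒜 1, s i * u ∈ 𝒜 q) ∧
      g = ∑ i, s i * v i := by
  obtain ⟨a, ha, b, hb, rfl⟩ := Submodule.mem_sup.mp hg
  have hhom : (Ideal.span (Set.range v)).IsHomogeneous 𝒜 :=
    Ideal.homogeneous_span 𝒜 _ (by rintro _ ⟨i, rfl⟩; exact ⟨1, hv i⟩)
  have hda : (DirectSum.decompose 𝒜 a q : G) ∈ Ideal.span (Set.range v) := hhom q ha
  have heq : a + b = (DirectSum.decompose 𝒜 a q : G) := by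
    have h1 : (DirectSum.decompose 𝒜 (a + b) q : G) = a + b :=
      DirectSum.decompose_of_mem_same 𝒜 hgq
    have h2 : (DirectSum.decompose 𝒜 (a + b) q : G)
        = (DirectSum.decompose 𝒜 a q : G) + (DirectSum.decompose 𝒜 b q : G) := by
      simpa [GradedRing.proj_apply] using map_add (GradedRing.proj 𝒜 q) a b
    rw [high_comp_zero 𝒜 n hb hqn, add_zero] at h2
    rw [← h1, h2]
  obtain ⟨s, hs1, hs2, hs3⟩ := span_coeffs 𝒜 v hv q (heq ▸ hgq) (heq ▸ (heq ▸ hda))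
  exact ⟨s, hs1, hs2, heq ▸ hs3⟩

lemma img_eq {d p : ℕ} (x : Fin d → G) (h1 : p + 1 ≤ d) (h2 : p ≤ d) :
    x ∘ Fin.castLE h1 '' {m : Fin (p + 1) | (m : ℕ) < p + 1 - 1}
      = Set.range fun t : Fin p => x (Fin.castLE h2 t) := by
  ext a
  simp only [Set.mem_image, Set.mem_setOf_eq, Set.mem_range, Function.comp_apply]
  constructor
  · rintro ⟨m, hm, rfl⟩
    exact ⟨⟨(m : ℕ), by omega⟩, congrArg x (by ext; simp)⟩
  · rintro ⟨t, rfl⟩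
    refine ⟨⟨(t : ℕ), by omega⟩, ?_, congrArg x (by ext; simp)⟩
    have := t.isLt
    simpa using this

/-- `H_1(x_1,...,x_k; G)_j = 0`, via the skew-matrix description of Koszul 1-boundaries. -/
def H1Vanish (𝒜 : ℕ → AddSubgroup G) {k : ℕ} (x : Fin k → G) (j : ℕ) : Prop :=
  ∀ r : Fin k → G, (∀ i, r i ∈ 𝒜 (j - 1)) → ∑ i, r i * x i = 0 →
    ∃ S : Matrix (Fin k) (Fin k) G,
      (∀ a, S a a = 0) ∧ (∀ a b, S b a = - S a b) ∧ ∀ i, r i = ∑ m, x m * S m i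

theorem stmt2 (𝒜 : ℕ → AddSubgroup G) [GradedRing 𝒜]
    (d : ℕ) (x : Fin d → G) (hx : ∀ m, x m ∈ 𝒜 1) (n : ℕ) (l : ℕ) (hl1 : 1 ≤ l) (hld : l ≤ d) :
    (∀ (j : ℕ), 1 ≤ j → j ≤ n → ∀ (k : ℕ) (hk1 : 1 ≤ k) (hk : k ≤ l),
        H1Vanish 𝒜 (fun m : Fin k => x (Fin.castLE (hk.trans hld) m)) j) ↔
      (∀ (k : ℕ) (hk1 : 1 ≤ k) (hk : k ≤ l),
        (Ideal.span (x ∘ Fin.castLE (hk.trans hld) '' {m : Fin k | (m : ℕ) < k - 1})).colon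
            (Ideal.span {x (Fin.castLE (hk.trans hld) ⟨k - 1, by omega⟩)}) ≤
          Ideal.span (x ∘ Fin.castLE (hk.trans hld) '' {m : Fin k | (m : ℕ) < k - 1}) ⊔
            Ideal.span {a : G | ∃ i : ℕ, n ≤ i ∧ a ∈ 𝒜 i}) := by
  constructor
  · -- forward direction
    intro h k hk1 hk
    obtain ⟨p, rfl⟩ : ∃ p, k = p + 1 := ⟨k - 1, by omega⟩
    have K : p + 1 ≤ d := hk.trans hld
    have hpd : p ≤ d := by omega
    set w : Fin p → G := fun t => x (Fin.castLE hpd t) with hw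
    set xl : G := x (Fin.castLE K ⟨p + 1 - 1, by omega⟩) with hxl
    have hyw : ∀ t : Fin p, x (Fin.castLE K t.castSucc) = w t := by
      intro t; rw [hw]; exact congrArg x (by ext; simp)
    have hylast : x (Fin.castLE K (Fin.last p)) = xl := by
      rw [hxl]; exact congrArg x (by ext; simp)
    have hIw : Ideal.span (x ∘ Fin.castLE K '' {m : Fin (p + 1) | (m : ℕ) < p + 1 - 1})
        = Ideal.span (Set.range w) := by rw [img_eq x K hpd]
    intro g hg
    rw [Ideal.mem_colon_span_singleton] at hg
    rw [hIw] at hg ⊢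
    have hIhom : (Ideal.span (Set.range w)).IsHomogeneous 𝒜 :=
      Ideal.homogeneous_span 𝒜 _ (by rintro _ ⟨i, rfl⟩; exact ⟨1, hx _⟩)
    classical
    rw [← DirectSum.sum_support_decompose 𝒜 g]
    refine Submodule.sum_mem _ fun m _ => ?_
    rcases le_or_gt n m with hnm | hnm
    · exact Submodule.mem_sup_right (Ideal.subset_span ⟨m, hnm, SetLike.coe_mem _⟩)
    · set gm : G := (DirectSum.decompose 𝒜 g m : G) with hgm
      refine Submodule.mem_sup_left ?_
      have hgml : gm * xl ∈ Ideal.span (Set.range w) := by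
        have h1 : (DirectSum.decompose 𝒜 (g * xl) (m + 1) : G) ∈ Ideal.span (Set.range w) :=
          hIhom (m + 1) hg
        have h2 : (DirectSum.decompose 𝒜 (g * xl) (m + 1) : G)
            = (DirectSum.decompose 𝒜 g (m + 1 - 1) : G) * xl :=
          DirectSum.coe_decompose_mul_of_right_mem_of_le 𝒜 (hx _) (by omega)
        rw [h2] at h1
        simpa using h1
      have hgmx : gm * xl ∈ 𝒜 (m + 1) := by
        have := SetLike.mul_mem_graded (SetLike.coe_mem (DirectSum.decompose 𝒜 g m))
          (hx (Fin.castLE K ⟨p + 1 - 1, by omega⟩))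
        exact this
      obtain ⟨s, hs1, _, hs3⟩ := span_coeffs 𝒜 w (fun i => hx _) (m + 1) hgmx hgml
      simp only [Nat.add_sub_cancel] at hs1
      -- build the relation
      set r : Fin (p + 1) → G := fun i =>
        if hi : (i : ℕ) < p then s ⟨(i : ℕ), hi⟩ else -gm with hr
      have hrc : ∀ t : Fin p, r t.castSucc = s t := by
        intro t
        have ht : ((t.castSucc : Fin (p + 1)) : ℕ) < p := by simpa using t.isLt
        rw [hr]; dsimp only; rw [dif_pos ht]
        exact congrArg s (by ext; simp)
      have hrlast : r (Fin.last p) = -gm := by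
        rw [hr]; dsimp only; rw [dif_neg (by simp)]
      have hrmem : ∀ i, r i ∈ 𝒜 (m + 1 - 1) := by
        intro i
        simp only [Nat.add_sub_cancel]
        rw [hr]; dsimp only
        split
        · exact hs1 _
        · exact neg_mem (SetLike.coe_mem _)
      have hrsum : ∑ i, r i * x (Fin.castLE K i) = 0 := by
        rw [Fin.sum_univ_castSucc]
        simp only [hyw, hylast, hrc, hrlast]
        rw [← hs3]; ring
      obtain ⟨S, hSdiag, _, hSr⟩ :=
        h (m + 1) (by omega) (by omega) (p + 1) (by omega) hk r hrmem hrsum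
      have hlast := hSr (Fin.last p)
      dsimp only at hlast
      rw [hrlast, Fin.sum_univ_castSucc] at hlast
      simp only [hyw, hylast] at hlast
      rw [hSdiag, mul_zero, add_zero] at hlast
      have hgm2 : gm = -(∑ t : Fin p, w t * S t.castSucc (Fin.last p)) :=
        neg_eq_iff_eq_neg.mp hlast
      rw [hgm2]
      exact neg_mem (Ideal.sum_mem _ fun t _ =>
        Ideal.mul_mem_right _ _ (Ideal.subset_span ⟨t, rfl⟩))
  · -- backward direction
    intro h j hj1 hjn
    have key : ∀ k (hk : k ≤ l),
        H1Vanish 𝒜 (fun m : Fin k => x (Fin.castLE (hk.trans hld) m)) j := by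
      intro k
      induction k with
      | zero =>
        intro hk r hr hsum
        exact ⟨0, fun a => a.elim0, fun a => a.elim0, fun i => i.elim0⟩
      | succ p ih =>
        intro hk r hr hsum
        have K : p + 1 ≤ d := hk.trans hld
        have hpl : p ≤ l := by omega
        have hpd : p ≤ d := hpl.trans hld
        set w : Fin p → G := fun t => x (Fin.castLE hpd t) with hw
        set xl : G := x (Fin.castLE K ⟨p + 1 - 1, by omega⟩) with hxl
        have hyw : ∀ t : Fin p, x (Fin.castLE K t.castSucc) = w t := by
          intro t; rw [hw]; exact congrArg x (by ext; simp)
        have hylast : x (Fin.castLE K (Fin.last p)) = xl := by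
          rw [hxl]; exact congrArg x (by ext; simp)
        have hww : ∀ t : Fin p, x (Fin.castLE (hpl.trans hld) t) = w t := fun _ => rfl
        dsimp only at hsum
        rw [Fin.sum_univ_castSucc] at hsum
        simp only [hyw, hylast] at hsum
        -- hsum : ∑ t, r t.castSucc * w t + r (last p) * xl = 0
        have hcol : r (Fin.last p) * xl ∈ Ideal.span (Set.range w) := by
          have he : r (Fin.last p) * xl = -∑ t : Fin p, r t.castSucc * w t := by
            linear_combination hsum
          rw [he]
          exact neg_mem (Ideal.sum_mem _ fun t _ =>
            Ideal.mul_mem_left _ _ (Ideal.subset_span ⟨t, rfl⟩))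
        have hsup : r (Fin.last p) ∈ Ideal.span (Set.range w)
            ⊔ Ideal.span {a : G | ∃ i : ℕ, n ≤ i ∧ a ∈ 𝒜 i} := by
          have hcolon := h (p + 1) (by omega) hk
          have hmem : r (Fin.last p) ∈
              (Ideal.span (x ∘ Fin.castLE (hk.trans hld)
                  '' {m : Fin (p + 1) | (m : ℕ) < p + 1 - 1})).colon
                (Ideal.span {x (Fin.castLE (hk.trans hld) ⟨p + 1 - 1, by omega⟩)}) := by
            rw [Ideal.mem_colon_span_singleton, img_eq x (hk.trans hld) hpd]
            exact hcol
          have h2 := hcolon hmem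
          rwa [img_eq x (hk.trans hld) hpd] at h2
        obtain ⟨s, hs1, hs2, hs3⟩ := sup_coeffs 𝒜 w (fun i => hx _) (show j - 1 < n by omega)
          (hr (Fin.last p)) hsup
        -- new relation of length p
        set r' : Fin p → G := fun i => r i.castSucc + s i * xl with hr'
        have hr'mem : ∀ i, r' i ∈ 𝒜 (j - 1) := fun i =>
          add_mem (hr _) (hs2 i xl (hx _))
        have hr'sum : ∑ i : Fin p, r' i * w i = 0 := by
          have expand : ∑ i : Fin p, r' i * w i
              = (∑ t, r t.castSucc * w t) + (∑ i, s i * w i) * xl := by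
            rw [Finset.sum_mul, ← Finset.sum_add_distrib]
            refine Finset.sum_congr rfl fun i _ => ?_
            rw [hr']; ring
          rw [expand, ← hs3]
          exact hsum
        obtain ⟨T, hTdiag, hTskew, hTr⟩ := ih hpl r' hr'mem hr'sum
        have hTr' : ∀ i0 : Fin p, r i0.castSucc + s i0 * xl = ∑ m, w m * T m i0 :=
          fun i0 => hTr i0
        classical
        -- assemble the (p+1)×(p+1) skew matrix
        set S : Matrix (Fin (p + 1)) (Fin (p + 1)) G := fun a b =>
          if ha : (a : ℕ) < p then
            (if hb : (b : ℕ) < p then T ⟨(a : ℕ), ha⟩ ⟨(b : ℕ), hb⟩ else s ⟨(a : ℕ), ha⟩)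
          else (if hb : (b : ℕ) < p then -s ⟨(b : ℕ), hb⟩ else 0) with hS
        have hSa : ∀ (t : Fin p) (b : Fin (p + 1)),
            S t.castSucc b = if hb : (b : ℕ) < p then T t ⟨(b : ℕ), hb⟩ else s t := by
          intro t b
          have ht : ((t.castSucc : Fin (p + 1)) : ℕ) < p := by simpa using t.isLt
          rw [hS]; dsimp only; rw [dif_pos ht]
          have htt : (⟨((t.castSucc : Fin (p + 1)) : ℕ), ht⟩ : Fin p) = t := by ext; simp
          rw [htt]
        have hSl : ∀ b : Fin (p + 1),
            S (Fin.last p) b = if hb : (b : ℕ) < p then -s ⟨(b : ℕ), hb⟩ else 0 := by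
          intro b
          rw [hS]; dsimp only; rw [dif_neg (by simp)]
        refine ⟨S, ?_, ?_, ?_⟩
        · intro a
          rw [hS]; dsimp only
          by_cases ha : (a : ℕ) < p
          · simp only [dif_pos ha]
            exact hTdiag _
          · simp only [dif_neg ha]
        · intro a b
          rw [hS]; dsimp only
          by_cases ha : (a : ℕ) < p <;> by_cases hb : (b : ℕ) < p
          · simp only [dif_pos ha, dif_pos hb]
            exact hTskew _ _
          · simp only [dif_pos ha, dif_neg hb]
          · simp only [dif_neg ha, dif_pos hb]
            exact (neg_neg _).symm
          · simp only [dif_neg ha, dif_neg hb]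
            exact neg_zero.symm
        · intro i
          dsimp only
          rw [Fin.sum_univ_castSucc]
          simp only [hyw, hylast, hSa, hSl]
          by_cases hi : (i : ℕ) < p
          · simp only [dif_pos hi]
            have hT := hTr' ⟨(i : ℕ), hi⟩
            have hicast : ((⟨(i : ℕ), hi⟩ : Fin p).castSucc : Fin (p + 1)) = i := by ext; simp
            rw [hicast] at hT
            -- hT : r i + s ⟨i,hi⟩ * xl = ∑ m, w m * T m ⟨i,hi⟩
            linear_combination hT
          · simp only [dif_neg hi]
            have hilast : i = Fin.last p := by
              have h2 := i.isLt
              apply Fin.ext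
              simp only [Fin.val_last]
              omega
            subst hilast
            rw [hs3]
            simp only [mul_zero, add_zero]
            exact Finset.sum_congr rfl fun t _ => mul_comm _ _
    exact fun k _ hk => key k hk
end

section
/- Let R = k[[t^4, t^5, t^{11}]] with maximal ideal m = (t^4, t^5, t^{11}) and J = (t^4). Then t^{15} ∈ (J ∩ m^3) \ J·m^2; in particular J ∩ m^3 ≠ J·m^2, so the maximal ideal of this one-dimensional Cohen-Macaulay local ring is not three-standard with respect to the minimal reduction J. -/
/-!
STATEMENT 17: Let `R = k[[t^4, t^5, t^11]]` (the complete subring of `k[[t]]` of power series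
supported on the numerical semigroup `⟨4,5,11⟩`), with `m = (t^4, t^5, t^11)` and `J = (t^4)`.
Then `t^15 ∈ (J ∩ m^3) \ J·m^2`; in particular `J ∩ m^3 ≠ J·m^2`, so the maximal ideal of this
one-dimensional Cohen–Macaulay local ring is not three-standard with respect to the minimal
reduction `J`.
-/

set_option synthInstance.maxHeartbeats 1000000
set_option maxHeartbeats 1000000

open PowerSeries

variable (k : Type*) [Field k]

/-- the numerical semigroup `⟨4, 5, 11⟩`. -/
def expS : AddSubmonoid ℕ := AddSubmonoid.closure {4, 5, 11}

/-- `k[[t^4,t^5,t^11]]`: power series supported on the semigroup `⟨4,5,11⟩`. -/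
noncomputable def sgRing : Subalgebra k (PowerSeries k) where
  carrier := {f | ∀ n : ℕ, coeff n f ≠ 0 → n ∈ expS}
  zero_mem' := by intro n hn; simp at hn
  one_mem' := by
    intro n hn
    rcases eq_or_ne n 0 with h | h
    · simpa [h] using expS.zero_mem
    · simp [coeff_one, h] at hn
  add_mem' := by
    intro f g hf hg n hn
    rw [Set.mem_setOf_eq] at hf hg
    rw [map_add] at hn
    by_cases hfn : coeff n f = 0
    · exact hg n (by simpa [hfn] using hn)
    · exact hf n hfn
  mul_mem' := by
    intro f g hf hg n hn
    rw [Set.mem_setOf_eq] at hf hg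
    by_contra hns
    apply hn
    rw [coeff_mul]
    refine Finset.sum_eq_zero fun p hp => ?_
    by_cases h1 : coeff p.1 f = 0
    · simp [h1]
    · by_cases h2 : coeff p.2 g = 0
      · simp [h2]
      · exact absurd ((Finset.HasAntidiagonal.mem_antidiagonal.mp hp) ▸ expS.add_mem (hf _ h1) (hg _ h2)) hns
  algebraMap_mem' := by
    intro c n hn
    rcases eq_or_ne n 0 with h | h
    · simpa [h] using expS.zero_mem
    · exfalso; apply hn; simp [PowerSeries.algebraMap_apply, coeff_C, h]

lemma xpow_mem {m : ℕ} (hm : m ∈ expS) : (X : PowerSeries k) ^ m ∈ sgRing k := by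
  intro n hn
  rw [coeff_X_pow] at hn
  rcases eq_or_ne n m with h | h
  · exact h ▸ hm
  · simp [h] at hn

lemma four_mem : (4 : ℕ) ∈ expS := AddSubmonoid.subset_closure (by simp)
lemma five_mem : (5 : ℕ) ∈ expS := AddSubmonoid.subset_closure (by simp)
lemma eleven_mem : (11 : ℕ) ∈ expS := AddSubmonoid.subset_closure (by simp)
lemma fifteen_mem : (15 : ℕ) ∈ expS := by
  have : (15 : ℕ) = 4 + 11 := by norm_num
  exact this ▸ expS.add_mem four_mem eleven_mem

/-- `t^m` as an element of `k[[t^4,t^5,t^11]]`. -/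
noncomputable def tpow (m : ℕ) (hm : m ∈ expS) : ↥(sgRing k) := ⟨(X : PowerSeries k) ^ m, xpow_mem k hm⟩

/-- the maximal ideal `m = (t^4, t^5, t^11)`. -/
noncomputable def mIdeal : Ideal ↥(sgRing k) :=
  Ideal.span {tpow k 4 four_mem, tpow k 5 five_mem, tpow k 11 eleven_mem}

/-- the minimal reduction `J = (t^4)`. -/
noncomputable def JIdeal : Ideal ↥(sgRing k) := Ideal.span {tpow k 4 four_mem}

lemma coeff_mul_ne_zero' {f g : PowerSeries k} {n : ℕ} (h : coeff n (f * g) ≠ 0) :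
    ∃ u v, u + v = n ∧ coeff u f ≠ 0 ∧ coeff v g ≠ 0 := by
  rw [coeff_mul] at h
  obtain ⟨p, hp, hne⟩ := Finset.exists_ne_zero_of_sum_ne_zero h
  exact ⟨p.1, p.2, Finset.HasAntidiagonal.mem_antidiagonal.mp hp, left_ne_zero_of_mul hne,
    right_ne_zero_of_mul hne⟩

lemma expS_small {n : ℕ} (hn : n ∈ expS) : n = 0 ∨ n = 4 ∨ n = 5 ∨ 8 ≤ n := by
  induction hn using AddSubmonoid.closure_induction with
  | mem x hx =>
    simp only [Set.mem_insert_iff, Set.mem_singleton_iff] at hx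
    omega
  | zero => omega
  | add x y _ _ hx hy => omega

/-- The key construction: power series in `sgRing` whose support satisfies a predicate `Q`
closed under adding semigroup elements on the left form an ideal. -/
noncomputable def suppIdeal (Q : ℕ → Prop) (hQ : ∀ s n, s ∈ expS → Q n → Q (s + n)) :
    Ideal ↥(sgRing k) where
  carrier := {f | ∀ n, coeff n f.1 ≠ 0 → Q n}
  zero_mem' := by intro n hn; simp at hn
  add_mem' := by
    intro f g hf hg n hn
    rw [Set.mem_setOf_eq] at hf hg
    rw [show ((f + g : ↥(sgRing k)) : PowerSeries k) = f.1 + g.1 from rfl, map_add] at hn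
    by_cases hfn : coeff n f.1 = 0
    · exact hg n (by simpa [hfn] using hn)
    · exact hf n hfn
  smul_mem' := by
    intro c x hx n hn
    rw [Set.mem_setOf_eq] at hx
    rw [smul_eq_mul] at hn
    have hn' : coeff n (c.1 * x.1) ≠ 0 := hn
    obtain ⟨u, v, huv, hu, hv⟩ := coeff_mul_ne_zero' k hn'
    exact huv ▸ hQ u v (c.2 u hu) (hx v hv)

lemma tpow_mem_suppIdeal {m : ℕ} (hm : m ∈ expS) (Q : ℕ → Prop)
    (hQ : ∀ s n, s ∈ expS → Q n → Q (s + n)) (hQm : Q m) :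
    tpow k m hm ∈ suppIdeal k Q hQ := by
  intro n hn
  have : coeff n ((X : PowerSeries k) ^ m) ≠ 0 := hn
  rw [coeff_X_pow] at this
  rcases eq_or_ne n m with h | h
  · exact h ▸ hQm
  · simp [h] at this

lemma hQm : ∀ s n, s ∈ expS → (n ∈ expS ∧ 4 ≤ n) → (s + n ∈ expS ∧ 4 ≤ s + n) :=
  fun s n hs hn => ⟨expS.add_mem hs hn.1, by omega⟩

lemma m_le : mIdeal k ≤ suppIdeal k (fun n => n ∈ expS ∧ 4 ≤ n) (hQm) := by
  rw [mIdeal, Ideal.span_le]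
  rintro x (rfl | rfl | rfl)
  · exact tpow_mem_suppIdeal k four_mem _ _ ⟨four_mem, by omega⟩
  · exact tpow_mem_suppIdeal k five_mem _ _ ⟨five_mem, by omega⟩
  · exact tpow_mem_suppIdeal k eleven_mem _ _ ⟨eleven_mem, by omega⟩

lemma hQm2 : ∀ s n, s ∈ expS → (n ∈ expS ∧ 8 ≤ n ∧ n ≠ 11) →
    (s + n ∈ expS ∧ 8 ≤ s + n ∧ s + n ≠ 11) := by
  rintro s n hs ⟨hn, h8, h11⟩
  refine ⟨expS.add_mem hs hn, by omega, ?_⟩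
  intro h
  rcases expS_small hs with rfl | rfl | rfl | h8' <;> omega

lemma m2_le : (mIdeal k) ^ 2 ≤ suppIdeal k (fun n => n ∈ expS ∧ 8 ≤ n ∧ n ≠ 11) hQm2 := by
  rw [sq]
  refine Ideal.mul_le.mpr fun a ha b hb => ?_
  have ha' := m_le k ha
  have hb' := m_le k hb
  intro n hn
  have hn' : coeff n (a.1 * b.1) ≠ 0 := hn
  obtain ⟨u, v, huv, hu, hv⟩ := coeff_mul_ne_zero' k hn'
  obtain ⟨huS, hu4⟩ := ha' u hu
  obtain ⟨hvS, hv4⟩ := hb' v hv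
  subst huv
  refine ⟨expS.add_mem huS hvS, by omega, ?_⟩
  rcases expS_small huS with rfl | rfl | rfl | h8u <;>
    rcases expS_small hvS with rfl | rfl | rfl | h8v <;> omega

lemma hQJ : ∀ s n, s ∈ expS → (∃ u ∈ expS, n = 4 + u) →
    ∃ u ∈ expS, s + n = 4 + u := by
  rintro s n hs ⟨u, hu, rfl⟩
  exact ⟨s + u, expS.add_mem hs hu, by omega⟩

lemma J_le : JIdeal k ≤ suppIdeal k (fun n => ∃ u ∈ expS, n = 4 + u) hQJ := by
  rw [JIdeal, Ideal.span_le]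
  rintro x rfl
  exact tpow_mem_suppIdeal k four_mem _ _ ⟨0, expS.zero_mem, rfl⟩

def QJm2 (n : ℕ) : Prop :=
  ∃ s ∈ expS, ∃ v, v ∈ expS ∧ 8 ≤ v ∧ v ≠ 11 ∧ n = 4 + s + v

lemma hQJm2 : ∀ s n, s ∈ expS → QJm2 n → QJm2 (s + n) := by
  rintro s n hs ⟨u, hu, v, hv, h8, h11, rfl⟩
  exact ⟨s + u, expS.add_mem hs hu, v, hv, h8, h11, by omega⟩

lemma Jm2_le : JIdeal k * (mIdeal k) ^ 2 ≤ suppIdeal k QJm2 hQJm2 := by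
  refine Ideal.mul_le.mpr fun a ha b hb => ?_
  have ha' := J_le k ha
  have hb' := m2_le k hb
  intro n hn
  have hn' : coeff n (a.1 * b.1) ≠ 0 := hn
  obtain ⟨u, v, huv, hu, hv⟩ := coeff_mul_ne_zero' k hn'
  obtain ⟨s, hsS, rfl⟩ := ha' u hu
  obtain ⟨hvS, hv8, hv11⟩ := hb' v hv
  exact ⟨s, hsS, v, hvS, hv8, hv11, by omega⟩

lemma not_QJm2_15 : ¬ QJm2 15 := by
  rintro ⟨s, hs, v, hvS, h8, h11, heq⟩
  rcases expS_small hs with rfl | rfl | rfl | h8s <;>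
    rcases expS_small hvS with rfl | rfl | rfl | h8v <;> omega

lemma tpow_mul {a b : ℕ} (ha : a ∈ expS) (hb : b ∈ expS) :
    tpow k (a + b) (expS.add_mem ha hb) = tpow k a ha * tpow k b hb := by
  apply Subtype.ext
  show (X : PowerSeries k) ^ (a + b) = X ^ a * X ^ b
  rw [pow_add]

theorem stmt17 :
    tpow k 15 fifteen_mem ∈ JIdeal k ⊓ (mIdeal k) ^ 3 ∧
      tpow k 15 fifteen_mem ∉ JIdeal k * (mIdeal k) ^ 2 ∧
      JIdeal k ⊓ (mIdeal k) ^ 3 ≠ JIdeal k * (mIdeal k) ^ 2 := by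
  have h1 : tpow k 15 fifteen_mem = tpow k 11 eleven_mem * tpow k 4 four_mem := by
    apply Subtype.ext
    show (X : PowerSeries k) ^ 15 = X ^ 11 * X ^ 4
    rw [← pow_add]
  have h2 : tpow k 15 fifteen_mem = (tpow k 5 five_mem) ^ 3 := by
    apply Subtype.ext
    show (X : PowerSeries k) ^ 15 = (X ^ 5) ^ 3
    rw [← pow_mul]
  have hmem : tpow k 15 fifteen_mem ∈ JIdeal k ⊓ (mIdeal k) ^ 3 := by
    constructor
    · rw [h1]
      exact Ideal.mul_mem_left _ _ (Ideal.subset_span (Set.mem_singleton _))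
    · rw [h2]
      refine Ideal.pow_mem_pow ?_ 3
      exact Ideal.subset_span (by simp)
  have hnot : tpow k 15 fifteen_mem ∉ JIdeal k * (mIdeal k) ^ 2 := by
    intro h
    apply not_QJm2_15
    refine Jm2_le k h 15 ?_
    show coeff 15 ((X : PowerSeries k) ^ 15) ≠ 0
    simp
  exact ⟨hmem, hnot, fun heq => hnot (heq ▸ hmem)⟩
end
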